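/- arXiv:1901.04774 — 7 statements merged into one kernel-verified Lean document; each statement's English description precedes it below -/
import Mathlib

section
/- Let w = w(x_1,...,x_n) be a multilinear commutator word, G a group, and N a normal subgroup of G. Then the w*-residual of N in G equals the subgroup generated by all w-values w(g_1,...,g_n) with g_1,...,g_n ∈ G such that at least one of g_1,...,g_n belongs to N. -/
/-- Multilinear commutator words: the word `x` in one variable is a multilinear commutator
word, and if `u` and `v` are multilinear commutator words (on disjoint sets of variables,
here enforced by using `m + n` fresh variables), then `[u,v]` is one. -/
inductive MultilinearCommutatorWord : ℕ → Type
  | var : MultilinearCommutatorWord 1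
  | comm : ∀ {m n : ℕ}, MultilinearCommutatorWord m → MultilinearCommutatorWord n →
      MultilinearCommutatorWord (m + n)

namespace MultilinearCommutatorWord

open scoped commutatorElement

/-- Evaluation of a multilinear commutator word on a tuple of group elements. -/
def eval {G : Type*} [Group G] : ∀ {n : ℕ}, MultilinearCommutatorWord n → (Fin n → G) → G
  | _, var, f => f 0
  | _, comm u v, f =>
      ⁅eval u (fun i => f (Fin.castAdd _ i)), eval v (fun j => f (Fin.natAdd _ j))⁆

end MultilinearCommutatorWord


/-- The marginal subgroup `w*(G)` of a group `G` corresponding to the word `w`, as a set: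
all `x` such that inserting `x` on either side of any entry does not change the value of `w`. -/
def marginal {G : Type*} [Group G] {n : ℕ} (w : MultilinearCommutatorWord n) : Set G :=
  {x : G | ∀ (g : Fin n → G) (i : Fin n),
    w.eval (Function.update g i (x * g i)) = w.eval g ∧
    w.eval (Function.update g i (g i * x)) = w.eval g}

/-- The `w*`-residual of a subset `S` of `G`: the intersection of all normal subgroups `N`
of `G` such that the image of `S` in `G ⧸ N` is contained in the marginal subgroup
`w*(G ⧸ N)`. -/
def wStarResidual {G : Type*} [Group G] {n : ℕ} (w : MultilinearCommutatorWord n)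
    (S : Set G) : Subgroup G :=
  sInf {N : Subgroup G | ∃ hN : N.Normal,
    letI := hN
    ∀ s ∈ S, (QuotientGroup.mk s : G ⧸ N) ∈ marginal w}

/-!
Let `K` be the subgroup generated by the `w`-values with an entry in `N`; it is normal because
this set of values is closed under conjugation. For a normal subgroup `M`, the image of `N` is
marginal in `G ⧸ M` exactly when `K ≤ M`, so `K` is the smallest such `M`.

If an entry of a tuple is marginal, it may be replaced by `1`, and a value with an entry `1` is
trivial: this gives `K ≤ M`. Conversely, induction on `w` shows that multiplying an entry by an
element of `N` changes the value only by a factor in `K`. For `w = [u, v]` and a change of the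
`u`-value `a` to `a * c`, with `c` in the subgroup generated by the `u`-values with an entry in
`N`, the value `[a, b]` changes by a conjugate of `[c, b]`; and `[c, b] ∈ K` because the `c` with
this property form a subgroup (the preimage of a centralizer in `G ⧸ K`) containing those
`u`-values.
-/

open scoped commutatorElement
open Function Subgroup

theorem commutatorElement_mem_of_mem_closure {G : Type*} [Group G] {K : Subgroup G} [K.Normal]
    {S : Set G} {b : G} (hS : ∀ x ∈ S, ⁅x, b⁆ ∈ K) {c : G} (hc : c ∈ closure S) :
    ⁅c, b⁆ ∈ K := by
  have hmem (x : G) :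
      ⁅x, b⁆ ∈ K ↔
        x ∈ (centralizer {QuotientGroup.mk' K b}).comap (QuotientGroup.mk' K) := by
    rw [mem_comap, mem_centralizer_singleton_iff, ← commutatorElement_eq_one_iff_mul_comm,
      ← map_commutatorElement, ← MonoidHom.mem_ker, QuotientGroup.ker_mk']
  exact (hmem c).2 ((closure_le _).2 (fun x hx => (hmem x).1 (hS x hx)) hc)

theorem Fin.castAdd_ne_natAdd {m n : ℕ} (j : Fin m) (k : Fin n) :
    Fin.castAdd n j ≠ Fin.natAdd m k :=
  Fin.ne_of_val_ne (by simp only [Fin.val_castAdd, Fin.val_natAdd]; omega)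

namespace MultilinearCommutatorWord

variable {G H : Type*} [Group G] [Group H] {m n : ℕ}

theorem eval_map (φ : G →* H) :
    ∀ {n : ℕ} (w : MultilinearCommutatorWord n) (f : Fin n → G),
      w.eval (φ ∘ f) = φ (w.eval f)
  | _, var, _ => rfl
  | _, comm u v, f => by
    rw [eval, eval, map_commutatorElement, ← eval_map φ u, ← eval_map φ v]
    rfl

theorem eval_eq_one_of_apply_eq_one :
    ∀ {n : ℕ} (w : MultilinearCommutatorWord n) {f : Fin n → G} {i : Fin n}, f i = 1 →
      w.eval f = 1
  | _, var, _, i, h => by rwa [eval, Subsingleton.elim 0 i]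
  | _, comm u v, _, i, h => by
    induction i using Fin.addCases with
    | left j => rw [eval, eval_eq_one_of_apply_eq_one u h, commutatorElement_one_left]
    | right j => rw [eval, eval_eq_one_of_apply_eq_one v h, commutatorElement_one_right]

theorem eval_comm_append (u : MultilinearCommutatorWord m) (v : MultilinearCommutatorWord n)
    (fu : Fin m → G) (fv : Fin n → G) :
    (comm u v).eval (Fin.append fu fv) = ⁅u.eval fu, v.eval fv⁆ := by
  simp only [eval, Fin.append_left, Fin.append_right]

theorem eval_comm_update_castAdd (u : MultilinearCommutatorWord m)
    (v : MultilinearCommutatorWord n) (g : Fin (m + n) → G) (j : Fin m) (x : G) :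
    (comm u v).eval (update g (Fin.castAdd n j) x) =
      ⁅u.eval (update (fun k => g (Fin.castAdd n k)) j x),
        v.eval fun k => g (Fin.natAdd m k)⁆ := by
  rw [eval, update_comp_eq_of_injective' g (Fin.castAdd_injective m n),
    update_comp_eq_of_forall_ne' g x fun k => (Fin.castAdd_ne_natAdd j k).symm]

theorem eval_comm_update_natAdd (u : MultilinearCommutatorWord m)
    (v : MultilinearCommutatorWord n) (g : Fin (m + n) → G) (j : Fin n) (x : G) :
    (comm u v).eval (update g (Fin.natAdd m j) x) =
      ⁅u.eval fun k => g (Fin.castAdd n k),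
        v.eval (update (fun k => g (Fin.natAdd m k)) j x)⁆ := by
  rw [eval, update_comp_eq_of_injective' g (Fin.natAdd_injective n m),
    update_comp_eq_of_forall_ne' g x fun k => Fin.castAdd_ne_natAdd k j]

def valuesWithEntryIn (w : MultilinearCommutatorWord n) (N : Subgroup G) : Set G :=
  {g | ∃ f : Fin n → G, (∃ i, f i ∈ N) ∧ w.eval f = g}

theorem closure_valuesWithEntryIn_normal (w : MultilinearCommutatorWord n) {N : Subgroup G}
    (hN : N.Normal) : (closure (valuesWithEntryIn w N)).Normal := by
  refine ⟨fun x hx z => ?_⟩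
  have hconj : (MulAut.conj z).toMonoidHom '' valuesWithEntryIn w N ⊆ valuesWithEntryIn w N := by
    rintro _ ⟨_, ⟨f, ⟨i, hi⟩, rfl⟩, rfl⟩
    exact ⟨(MulAut.conj z).toMonoidHom ∘ f, ⟨i, hN.conj_mem _ hi z⟩, eval_map _ w f⟩
  have hmap : (closure (valuesWithEntryIn w N)).map (MulAut.conj z).toMonoidHom ≤
      closure (valuesWithEntryIn w N) := by
    rw [MonoidHom.map_closure]
    exact closure_mono hconj
  exact hmap ⟨x, hx, rfl⟩

theorem inv_eval_mul_eval_update_mul_mem_closure {N : Subgroup G} (hN : N.Normal) :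
    ∀ {n : ℕ} (w : MultilinearCommutatorWord n) (g : Fin n → G) (i : Fin n) {s : G},
      s ∈ N →
        (w.eval g)⁻¹ * w.eval (update g i (g i * s)) ∈ closure (valuesWithEntryIn w N)
  | _, var, g, i, s, hs => by
    obtain rfl := Subsingleton.elim i 0
    refine subset_closure ⟨fun _ => s, ⟨0, hs⟩, ?_⟩
    simp [eval]
  | m + n, comm u v, g, i, s, hs => by
    have hK := closure_valuesWithEntryIn_normal (comm u v) hN
    set gu : Fin m → G := fun k => g (Fin.castAdd n k)
    set gv : Fin n → G := fun k => g (Fin.natAdd m k)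
    induction i using Fin.addCases with
    | left j =>
      set a := u.eval gu
      set b := v.eval gv
      set c := a⁻¹ * u.eval (update gu j (gu j * s))
      have hcb : ⁅c, b⁆ ∈ closure (valuesWithEntryIn (comm u v) N) := by
        refine commutatorElement_mem_of_mem_closure ?_
          (inv_eval_mul_eval_update_mul_mem_closure hN u gu j hs)
        rintro _ ⟨fu, ⟨k, hk⟩, rfl⟩
        exact subset_closure ⟨Fin.append fu gv, ⟨Fin.castAdd n k, by simpa using hk⟩,
          eval_comm_append u v fu gv⟩
      have hconj : ⁅a, b⁆⁻¹ * ⁅a * c, b⁆ =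
          (⁅a, b⁆⁻¹ * a) * ⁅c, b⁆ * (⁅a, b⁆⁻¹ * a)⁻¹ := by
        group
      rw [eval_comm_update_castAdd, ← mul_inv_cancel_left a (u.eval _)]
      exact hconj ▸ hK.conj_mem _ hcb _
    | right j =>
      set a := u.eval gu
      set b := v.eval gv
      set c := b⁻¹ * v.eval (update gv j (gv j * s))
      have hca : ⁅c, a⁆ ∈ closure (valuesWithEntryIn (comm u v) N) := by
        refine commutatorElement_mem_of_mem_closure ?_
          (inv_eval_mul_eval_update_mul_mem_closure hN v gv j hs)
        rintro _ ⟨fv, ⟨k, hk⟩, rfl⟩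
        rw [← commutatorElement_inv, ← eval_comm_append u v gu fv]
        exact inv_mem <| subset_closure
          ⟨Fin.append gu fv, ⟨Fin.natAdd m k, by simpa using hk⟩, rfl⟩
      have hconj : ⁅a, b⁆⁻¹ * ⁅a, b * c⁆ = b * ⁅c, a⁆⁻¹ * b⁻¹ := by group
      rw [eval_comm_update_natAdd, ← mul_inv_cancel_left b (v.eval _)]
      exact hconj ▸ hK.conj_mem _ (inv_mem hca) _

theorem eval_eq_one_of_apply_mem_marginal {w : MultilinearCommutatorWord n} {x : G}
    (hx : x ∈ marginal w) {f : Fin n → G} {i : Fin n} (hi : f i = x) : w.eval f = 1 := by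
  have h := (hx (update f i 1) i).1
  rwa [update_self, mul_one, update_idem, ← hi, update_eq_self,
    eval_eq_one_of_apply_eq_one w (update_self i 1 f)] at h

theorem mk_mem_marginal_of_valuesWithEntryIn_subset {N K : Subgroup G} (hN : N.Normal) [K.Normal]
    {w : MultilinearCommutatorWord n} (hK : valuesWithEntryIn w N ⊆ K) {s : G} (hs : s ∈ N) :
    (s : G ⧸ K) ∈ marginal w := by
  intro g i
  obtain ⟨g, rfl⟩ : ∃ g', QuotientGroup.mk' K ∘ g' = g :=
    (QuotientGroup.mk'_surjective K).comp_left g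
  have hright : ∀ t ∈ N, w.eval (update (QuotientGroup.mk' K ∘ g) i ((g i : G ⧸ K) * t)) =
      w.eval (QuotientGroup.mk' K ∘ g) := by
    intro t ht
    rw [← QuotientGroup.mk'_apply K t, ← QuotientGroup.mk'_apply K (g i), ← map_mul,
      ← comp_update, eval_map, eval_map, eq_comm, QuotientGroup.mk'_apply,
      QuotientGroup.mk'_apply, QuotientGroup.eq]
    exact (closure_le K).2 hK (inv_eval_mul_eval_update_mul_mem_closure hN w g i ht)
  have hconj : (s : G ⧸ K) * g i = g i * ((g i)⁻¹ * s * g i : G) := by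
    simp [mul_assoc]
  refine ⟨?_, hright s hs⟩
  rw [comp_apply, QuotientGroup.mk'_apply, hconj]
  exact hright _ (by simpa using hN.conj_mem s hs (g i)⁻¹)

theorem forall_mk_mem_marginal_iff {N K : Subgroup G} (hN : N.Normal) [K.Normal]
    (w : MultilinearCommutatorWord n) :
    (∀ s ∈ N, (s : G ⧸ K) ∈ marginal w) ↔ closure (valuesWithEntryIn w N) ≤ K := by
  rw [closure_le]
  refine ⟨?_, fun hK _ => mk_mem_marginal_of_valuesWithEntryIn_subset hN hK⟩
  rintro h _ ⟨f, ⟨i, hi⟩, rfl⟩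
  rw [SetLike.mem_coe, ← QuotientGroup.eq_one_iff, ← QuotientGroup.mk'_apply, ← eval_map]
  exact eval_eq_one_of_apply_mem_marginal (h _ hi) rfl

end MultilinearCommutatorWord

open MultilinearCommutatorWord in
/-- If `w` is a multilinear commutator word on `n` variables, `G` a group and `N` a normal
subgroup of `G`, then the `w*`-residual of `N` in `G` is the subgroup generated by all
`w`-values `w(g 0, ..., g (n-1))` in which at least one entry lies in `N`. -/
theorem wStarResidual_eq_closure_values_with_entry_in {G : Type*} [Group G]
    {n : ℕ} (w : MultilinearCommutatorWord n) (N : Subgroup G) (hN : N.Normal) :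
    wStarResidual w (N : Set G) =
      Subgroup.closure {g : G | ∃ f : Fin n → G, (∃ i, f i ∈ N) ∧ w.eval f = g} := by
  change _ = closure (valuesWithEntryIn w N)
  have hK := closure_valuesWithEntryIn_normal w hN
  refine le_antisymm (sInf_le ⟨hK, (forall_mk_mem_marginal_iff hN w).2 le_rfl⟩) (le_sInf ?_)
  rintro M ⟨_, hmarg⟩
  exact (forall_mk_mem_marginal_iff hN w).1 hmarg
end

section
/- Let w = w(x_1,...,x_n) be a multilinear commutator word, G a group, T a normal subgroup of G, and a_1,...,a_n elements of G such that every element of X_w(a_1T,...,a_nT) has at most m conjugates in G. Then every w-value w(t_1,...,t_n) with t_1,...,t_n ∈ T has at most m^{2^n} conjugates in G. -/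
open scoped commutatorElement

/-!
Write `X = X_w(a_1 T, …, a_n T)`. Every `w`-value on `T` lies in `(X X⁻¹)^(2^(n-1))`: for one
variable, `t = (t a) a⁻¹`; for `w = [u, v]`, expand `⁅x, y⁆` with `x ∈ (X_u X_u⁻¹)^k` and
`y ∈ (X_v X_v⁻¹)^l` by the product rules for commutators. Because `X_u X_u⁻¹` and `X_v X_v⁻¹` lie
in `T` and `X_u`, `X_v` are stable under conjugation by `T`, every conjugating element that
appears lies in `T` and can be pushed into the arguments, so each factor is again of the form
`[X_u, X_v] [X_u, X_v]⁻¹`. Conjugacy class sizes are submultiplicative, whence `m^(2^n)`.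
-/

open scoped Pointwise

section ConjugacyClasses

variable {G : Type*} [Group G]

theorem conjugatesOf_mul_subset (x y : G) :
    conjugatesOf (x * y) ⊆ conjugatesOf x * conjugatesOf y := by
  intro z hz
  obtain ⟨c, rfl⟩ := isConj_iff.mp hz
  exact ⟨_, isConj_iff.mpr ⟨c, rfl⟩, _, isConj_iff.mpr ⟨c, rfl⟩, by group⟩

theorem encard_conjugatesOf_mul_le (x y : G) :
    (conjugatesOf (x * y)).encard ≤ (conjugatesOf x).encard * (conjugatesOf y).encard := by
  refine (Set.encard_le_encard (conjugatesOf_mul_subset x y)).trans ?_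
  simp only [← Set.toENat_cardinalMk, ← map_mul]
  exact Cardinal.toENat.monotone' Cardinal.mk_mul_le

theorem conjugatesOf_inv (x : G) : conjugatesOf x⁻¹ = (conjugatesOf x)⁻¹ := by
  ext y
  simp only [conjugatesOf, Set.mem_ofPred_eq, Set.mem_inv, isConj_iff]
  exact ⟨fun ⟨c, h⟩ => ⟨c, by rw [← h]; group⟩,
    fun ⟨c, h⟩ => ⟨c, by rw [← inv_inv y, ← h]; group⟩⟩

theorem encard_conjugatesOf_le_pow {S : Set G} {M : ℕ∞}
    (hS : ∀ x ∈ S, (conjugatesOf x).encard ≤ M) :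
    ∀ k, ∀ g ∈ S ^ k, (conjugatesOf g).encard ≤ M ^ k
  | 0, g, hg => by
    have hone : conjugatesOf (1 : G) = {1} := Set.ext fun _ => isConj_one_right
    rw [Set.mem_one.mp hg, hone, Set.encard_singleton, pow_zero]
  | k + 1, _, ⟨g, hg, x, hx, rfl⟩ =>
    (encard_conjugatesOf_mul_le g x).trans <| by
      rw [pow_succ]; exact mul_le_mul' (encard_conjugatesOf_le_pow hS k g hg) (hS x hx)

theorem encard_conjugatesOf_le_of_mem_mul_inv_pow {X : Set G} {M : ℕ∞}
    (hX : ∀ x ∈ X, (conjugatesOf x).encard ≤ M) (k : ℕ) :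
    ∀ g ∈ (X * X⁻¹) ^ k, (conjugatesOf g).encard ≤ M ^ (2 * k) := by
  rw [pow_mul, sq]
  refine encard_conjugatesOf_le_pow ?_ k
  rintro _ ⟨x, hx, y, hy, rfl⟩
  refine (encard_conjugatesOf_mul_le x y).trans (mul_le_mul' (hX x hx) ?_)
  rw [← inv_inv y, conjugatesOf_inv, Set.encard_inv]
  exact hX _ hy

end ConjugacyClasses

section Commutators

variable {G : Type*} [Group G] {T : Subgroup G} {X Y Z : Set G}

theorem commutatorElement_mem_mul_inv_pow_right (hX : T ≤ Subgroup.normalizer X)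
    (hY : T ≤ Subgroup.normalizer Y) (hYT : Y * Y⁻¹ ⊆ T) (hZ : ∀ x ∈ X, ∀ y ∈ Y, ⁅x, y⁆ ∈ Z) :
    ∀ k, ∀ x ∈ X, ∀ y ∈ (Y * Y⁻¹) ^ k, ⁅x, y⁆ ∈ (Z * Z⁻¹) ^ k
  | 0, x, _, y, hy => by
    rw [pow_zero] at hy ⊢
    rw [Set.mem_one.mp hy, commutatorElement_one_right]
    exact Set.one_mem_one
  | k + 1, x, hx, _, ⟨y, hy, _, ⟨r, hr, s, hs, rfl⟩, rfl⟩ => by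
    have conj_mem := fun {S : Set G} (hS : T ≤ Subgroup.normalizer S) =>
      Subgroup.le_set_normalizer_iff.mp hS
    have hyT : y ∈ T := Subgroup.pow_subset hYT hy
    set c := y * (r * s)
    have hcT : c ∈ T := mul_mem hyT (hYT (Set.mul_mem_mul hr hs))
    have key : ⁅x, y * (r * s)⁆ =
        ⁅x, y⁆ * (⁅y * x * y⁻¹, y * r * y⁻¹⁆ * ⁅c * x * c⁻¹, c * s⁻¹ * c⁻¹⁆⁻¹) := by
      simp only [c, commutatorElement_def]; group
    rw [key, pow_succ]
    refine Set.mul_mem_mul (commutatorElement_mem_mul_inv_pow_right hX hY hYT hZ k x hx y hy)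
      (Set.mul_mem_mul (hZ _ (conj_mem hX y hyT x hx) _ (conj_mem hY y hyT r hr))
        (Set.inv_mem_inv.mpr (hZ _ (conj_mem hX c hcT x hx) _ (conj_mem hY c hcT _ hs))))

theorem commutatorElement_mem_inv_mul_pow_left (hX : T ≤ Subgroup.normalizer X)
    (hY : T ≤ Subgroup.normalizer Y) (hXT : X * X⁻¹ ⊆ T) (hZ : ∀ x ∈ X, ∀ y ∈ Y, ⁅x, y⁆ ∈ Z)
    (k : ℕ) : ∀ x ∈ (X * X⁻¹) ^ k, ∀ y ∈ Y, ⁅x, y⁆ ∈ (Z⁻¹ * Z) ^ k := by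
  intro x hx y hy
  have hZ' : ∀ y ∈ Y, ∀ x ∈ X, ⁅y, x⁆ ∈ Z⁻¹ := fun y hy x hx => by
    rw [Set.mem_inv, commutatorElement_inv]; exact hZ x hx y hy
  have h := commutatorElement_mem_mul_inv_pow_right hY hX hXT hZ' k y hy x hx
  rw [← Set.inv_mem_inv, commutatorElement_inv, ← inv_pow, mul_inv_rev] at h
  simpa only [inv_inv] using h

end Commutators

namespace MultilinearCommutatorWord

variable {G : Type*} [Group G]

theorem pos : ∀ {n : ℕ}, MultilinearCommutatorWord n → 0 < n
  | _, var => one_pos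
  | _, comm u _ => Nat.add_pos_left u.pos _

theorem map_eval {H F : Type*} [Group H] [FunLike F G H] [MonoidHomClass F G H] (φ : F) :
    ∀ {n : ℕ} (w : MultilinearCommutatorWord n) (f : Fin n → G), φ (w.eval f) = w.eval (φ ∘ f)
  | _, var, _ => rfl
  | _, comm u v, f => by
    simp only [eval, map_commutatorElement, map_eval φ u, map_eval φ v]
    rfl

/-- `X_w(A_1, ..., A_n)`. -/
def values {n : ℕ} (w : MultilinearCommutatorWord n) (A : Fin n → Set G) : Set G :=
  w.eval '' Set.univ.pi A

theorem values_comm {p q : ℕ} (u : MultilinearCommutatorWord p)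
    (v : MultilinearCommutatorWord q) (A : Fin (p + q) → Set G) :
    (u.comm v).values A =
      Set.image2 (⁅·, ·⁆) (u.values fun i => A (Fin.castAdd q i))
        (v.values fun j => A (Fin.natAdd p j)) := by
  ext z
  constructor
  · rintro ⟨f, hf, rfl⟩
    exact ⟨_, ⟨_, fun i _ => hf _ trivial, rfl⟩, _, ⟨_, fun j _ => hf _ trivial, rfl⟩, rfl⟩
  · rintro ⟨_, ⟨f, hf, rfl⟩, _, ⟨g, hg, rfl⟩, rfl⟩
    refine ⟨Fin.append f g, fun i _ => ?_, by simp [eval]⟩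
    refine Fin.addCases (fun i => ?_) (fun j => ?_) i
    · simpa using hf i trivial
    · simpa using hg j trivial

theorem le_normalizer_values {n : ℕ} (w : MultilinearCommutatorWord n) {H : Subgroup G}
    {A : Fin n → Set G} (hA : ∀ i, H ≤ Subgroup.normalizer (A i)) :
    H ≤ Subgroup.normalizer (w.values A) := by
  refine Subgroup.le_set_normalizer_iff.mpr fun h hh _ ⟨f, hf, hfx⟩ => ?_
  refine ⟨MulAut.conj h ∘ f, fun i _ => ?_, ?_⟩
  · exact Subgroup.le_set_normalizer_iff.mp (hA i) h hh _ (hf i trivial)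
  · rw [← map_eval, hfx, MulAut.conj_apply]

/-- `X_w(a_1 T, ..., a_n T)`. -/
def cosetValues {n : ℕ} (w : MultilinearCommutatorWord n) (T : Subgroup G) (a : Fin n → G) :
    Set G :=
  w.values fun i => a i • (T : Set G)

variable {T : Subgroup G} [T.Normal]

theorem le_normalizer_cosetValues {n : ℕ} (w : MultilinearCommutatorWord n) (a : Fin n → G) :
    T ≤ Subgroup.normalizer (w.cosetValues T a) := by
  refine w.le_normalizer_values fun i => Subgroup.le_set_normalizer_iff.mpr fun σ hσ x hx => ?_
  rw [mem_leftCoset_iff] at hx ⊢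
  have h : (a i)⁻¹ * (σ * x * σ⁻¹) = (a i)⁻¹ * σ * a i * ((a i)⁻¹ * x) * σ⁻¹ := by group
  rw [h]
  exact mul_mem (mul_mem (‹T.Normal›.conj_mem' σ hσ (a i)) hx) (inv_mem hσ)

theorem mk_eq_of_mem_cosetValues {n : ℕ} {w : MultilinearCommutatorWord n} {a : Fin n → G}
    {x : G} (hx : x ∈ w.cosetValues T a) : (x : G ⧸ T) = w.eval fun i => (a i : G ⧸ T) := by
  obtain ⟨f, hf, rfl⟩ := hx
  rw [← QuotientGroup.mk'_apply, map_eval]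
  congr 1
  funext i
  exact (QuotientGroup.eq.mpr ((mem_leftCoset_iff _).mp (hf i trivial))).symm

theorem mul_inv_cosetValues_subset {n : ℕ} (w : MultilinearCommutatorWord n) (a : Fin n → G) :
    w.cosetValues T a * (w.cosetValues T a)⁻¹ ⊆ T := by
  rintro _ ⟨x, hx, y, hy, rfl⟩
  rw [SetLike.mem_coe, ← QuotientGroup.eq_one_iff, ← inv_inv y, QuotientGroup.mk_mul,
    QuotientGroup.mk_inv, mk_eq_of_mem_cosetValues hx, mk_eq_of_mem_cosetValues hy,
    mul_inv_cancel]

theorem values_subgroup_subset_mul_inv_pow :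
    ∀ {n : ℕ} (w : MultilinearCommutatorWord n) (a : Fin n → G),
      w.values (fun _ => (T : Set G)) ⊆
        (w.cosetValues T a * (w.cosetValues T a)⁻¹) ^ 2 ^ (n - 1)
  | _, var, a => by
    rintro _ ⟨t, ht, rfl⟩
    have hmem : ∀ x : G, x ∈ a 0 • (T : Set G) → x ∈ var.cosetValues T a := fun x hx =>
      ⟨fun _ => x, fun i _ => by rwa [Subsingleton.elim i 0], rfl⟩
    rw [pow_zero, pow_one]
    refine ⟨t 0 * a 0, hmem _ ?_, (a 0)⁻¹, ?_, mul_inv_cancel_right _ _⟩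
    · rw [mem_leftCoset_iff, ← mul_assoc]
      exact ‹T.Normal›.conj_mem' _ (ht 0 trivial) _
    · rw [Set.mem_inv, inv_inv]
      exact hmem _ ((mem_leftCoset_iff _).mpr (by simp))
  | _, comm (m := p) (n := q) u v, a => by
    rw [values_comm]
    rintro _ ⟨x, hx, y, hy, rfl⟩
    have hvalues : ∀ x ∈ u.cosetValues T (fun i => a (Fin.castAdd q i)),
        ∀ y ∈ v.cosetValues T (fun j => a (Fin.natAdd p j)),
          ⁅x, y⁆ ∈ (u.comm v).cosetValues T a := fun x hx y hy => by
      rw [cosetValues, values_comm]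
      exact Set.mem_image2_of_mem hx hy
    have hright := commutatorElement_mem_mul_inv_pow_right (le_normalizer_cosetValues _ _)
      (le_normalizer_cosetValues _ _) (mul_inv_cosetValues_subset _ _) hvalues
    have hleft := commutatorElement_mem_inv_mul_pow_left (le_normalizer_cosetValues _ _)
      (v.le_normalizer_values fun _ => Subgroup.le_normalizer) (mul_inv_cosetValues_subset _ _)
      (fun x hx y hy => hright _ x hx y (values_subgroup_subset_mul_inv_pow v _ hy))
      _ x (values_subgroup_subset_mul_inv_pow u _ hx) y hy
    rw [← inv_pow, mul_inv_rev, inv_inv, ← pow_add, ← pow_mul, ← two_mul, ← pow_succ',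
      Nat.sub_add_cancel v.pos, ← pow_add] at hleft
    convert hleft using 3
    have := u.pos
    omega

end MultilinearCommutatorWord

/-- Let `w` be a multilinear commutator word on `n` variables, `G` a group, `T` a normal
subgroup of `G`, and `a 0, ..., a (n-1)` elements of `G` such that every element of
`X_w(a 0 T, ..., a (n-1) T)` has at most `m` conjugates in `G`. Then every `w`-value on a
tuple of elements of `T` has at most `m ^ 2 ^ n` conjugates in `G`. -/
theorem conjugates_of_values_in_normal_subgroup {G : Type*} [Group G]
    {n : ℕ} (w : MultilinearCommutatorWord n) (T : Subgroup G) (hT : T.Normal)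
    (m : ℕ) (a : Fin n → G)
    (hm : ∀ g : G, (∃ f : Fin n → G, (∀ i, (a i)⁻¹ * f i ∈ T) ∧ w.eval f = g) →
      {y : G | IsConj g y}.Finite ∧ {y : G | IsConj g y}.ncard ≤ m) :
    ∀ g : G, (∃ f : Fin n → G, (∀ i, f i ∈ T) ∧ w.eval f = g) →
      {y : G | IsConj g y}.Finite ∧ {y : G | IsConj g y}.ncard ≤ m ^ 2 ^ n := by
  rintro _ ⟨f, hf, rfl⟩
  have hX : ∀ x ∈ w.cosetValues T a, (conjugatesOf x).encard ≤ m := by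
    rintro _ ⟨f', hf', rfl⟩
    exact Set.encard_le_coe_iff_finite_ncard_le.mpr
      (hm _ ⟨f', fun i => (mem_leftCoset_iff _).mp (hf' i trivial), rfl⟩)
  have hw := encard_conjugatesOf_le_of_mem_mul_inv_pow hX _ _
    (w.values_subgroup_subset_mul_inv_pow a ⟨f, fun i _ => hf i, rfl⟩)
  rw [← pow_succ', Nat.sub_add_cancel w.pos] at hw
  exact Set.encard_le_coe_iff_finite_ncard_le.mp (by exact_mod_cast hw)
end

section
/- Let w = w(x_1,...,x_n) be a multilinear commutator word. There exists a positive integer t_n, depending only on n, such that for every group G, every normal subgroup H of G, all g_1,...,g_n ∈ G, and all h_1,...,h_n ∈ H, the w-value w(g_1h_1,...,g_nh_n) can be written as w(g_1h_1,...,g_nh_n) = a·h, where a is a product of at most t_n conjugates in G of elements of the set {g_1^{±1},...,g_n^{±1}} and h is a w-value of H. -/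
open scoped commutatorElement

universe u

/-! Induct on `w`. For `w = [u, v]` write `u(g h) = a x` and `v(g h) = b y`, where `x`, `y` are
the values of `u`, `v` at `h`. The identity
`[a x, b y] = a · b^x · (a⁻¹)^(x y x⁻¹) · (b⁻¹)^[x, y] · [x, y]`
(with `[p, q] = p q p⁻¹ q⁻¹` and `b^x = x b x⁻¹`)
keeps the `H`-part equal to `[x, y]`, the value of `w` at `h`, while the `G`-part becomes a
product of `2 (|a| + |b|)` conjugates of the `g i^{±1}`. Hence `t_n = 4 ^ n` works, as
`2 (4 ^ m + 4 ^ k) ≤ 4 ^ (m + k)` for `m, k ≥ 1`. -/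

theorem MultilinearCommutatorWord.arity_pos {n : ℕ} : MultilinearCommutatorWord n → 0 < n
  | .var => Nat.one_pos
  | .comm u _ => Nat.add_pos_left u.arity_pos _

section ShortProducts

variable {G : Type*} [Group G]

def IsProdOfAtMost (S : Set G) (t : ℕ) (a : G) : Prop :=
  ∃ L : List G, L.length ≤ t ∧ (∀ z ∈ L, z ∈ S) ∧ L.prod = a

namespace IsProdOfAtMost

variable {S T : Set G} {t s : ℕ} {a b : G}

theorem of_mem (ha : a ∈ S) : IsProdOfAtMost S 1 a :=
  ⟨[a], le_rfl, by simpa using ha, List.prod_singleton⟩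

theorem mono (hST : S ⊆ T) (hts : t ≤ s) (ha : IsProdOfAtMost S t a) :
    IsProdOfAtMost T s a :=
  let ⟨L, hlen, hmem, hprod⟩ := ha
  ⟨L, hlen.trans hts, fun z hz => hST (hmem z hz), hprod⟩

theorem mul (ha : IsProdOfAtMost S t a) (hb : IsProdOfAtMost S s b) :
    IsProdOfAtMost S (t + s) (a * b) := by
  obtain ⟨L, hL, hLS, rfl⟩ := ha
  obtain ⟨M, hM, hMS, rfl⟩ := hb
  refine ⟨L ++ M, by simp [hL, hM, add_le_add], ?_, List.prod_append⟩
  simpa only [List.mem_append] using fun z hz => hz.elim (hLS z) (hMS z)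

theorem inv (hS : ∀ z ∈ S, z⁻¹ ∈ S) (ha : IsProdOfAtMost S t a) :
    IsProdOfAtMost S t a⁻¹ := by
  obtain ⟨L, hL, hLS, rfl⟩ := ha
  refine ⟨(L.map (·⁻¹)).reverse, by simpa using hL, ?_, (List.prod_inv_reverse L).symm⟩
  simpa using fun z hz => by simpa using hS _ (hLS _ hz)

theorem conj (hS : ∀ c, ∀ z ∈ S, c * z * c⁻¹ ∈ S) (c : G) (ha : IsProdOfAtMost S t a) :
    IsProdOfAtMost S t (c * a * c⁻¹) := by
  obtain ⟨L, hL, hLS, rfl⟩ := ha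
  refine ⟨L.map (MulAut.conj c), by simpa using hL, ?_, (map_list_prod (MulAut.conj c) L).symm⟩
  simpa using fun z hz => hS c z (hLS z hz)

end IsProdOfAtMost

theorem commutatorElement_mul_mul (a x b y : G) :
    ⁅a * x, b * y⁆ = a * (x * b * x⁻¹) * ((x * y * x⁻¹) * a⁻¹ * (x * y * x⁻¹)⁻¹) *
      (⁅x, y⁆ * b⁻¹ * ⁅x, y⁆⁻¹) * ⁅x, y⁆ := by
  simp only [commutatorElement_def]
  group

theorem IsProdOfAtMost.exists_commutatorElement_mul_mul {S : Set G} {t s : ℕ} {a b : G}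
    (hinv : ∀ z ∈ S, z⁻¹ ∈ S) (hconj : ∀ c, ∀ z ∈ S, c * z * c⁻¹ ∈ S)
    (ha : IsProdOfAtMost S t a) (hb : IsProdOfAtMost S s b) (x y : G) :
    ∃ c, IsProdOfAtMost S (2 * (t + s)) c ∧ ⁅a * x, b * y⁆ = c * ⁅x, y⁆ := by
  refine ⟨_, ?_, commutatorElement_mul_mul a x b y⟩
  have hlen : 2 * (t + s) = t + s + t + s := by ring
  rw [hlen]
  exact ((ha.mul (hb.conj hconj x)).mul ((ha.inv hinv).conj hconj _)).mul
    ((hb.inv hinv).conj hconj _)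

def conjugatesOfFamilyAndInv {ι : Type*} (g : ι → G) : Set G :=
  {z | ∃ (c : G) (i : ι), z = c * g i * c⁻¹ ∨ z = c * (g i)⁻¹ * c⁻¹}

section conjugatesOfFamilyAndInv

variable {ι κ : Type*} {g : ι → G}

theorem mem_conjugatesOfFamilyAndInv (i : ι) : g i ∈ conjugatesOfFamilyAndInv g :=
  ⟨1, i, Or.inl (by group)⟩

theorem inv_mem_conjugatesOfFamilyAndInv {z : G} (hz : z ∈ conjugatesOfFamilyAndInv g) :
    z⁻¹ ∈ conjugatesOfFamilyAndInv g := by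
  obtain ⟨c, i, rfl | rfl⟩ := hz
  · exact ⟨c, i, Or.inr (by group)⟩
  · exact ⟨c, i, Or.inl (by group)⟩

theorem conj_mem_conjugatesOfFamilyAndInv (d : G) {z : G}
    (hz : z ∈ conjugatesOfFamilyAndInv g) : d * z * d⁻¹ ∈ conjugatesOfFamilyAndInv g := by
  obtain ⟨c, i, rfl | rfl⟩ := hz
  · exact ⟨d * c, i, Or.inl (by group)⟩
  · exact ⟨d * c, i, Or.inr (by group)⟩

theorem conjugatesOfFamilyAndInv_comp_subset (e : κ → ι) :
    conjugatesOfFamilyAndInv (g ∘ e) ⊆ conjugatesOfFamilyAndInv g :=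
  fun _ ⟨c, i, hz⟩ => ⟨c, e i, hz⟩

end conjugatesOfFamilyAndInv

end ShortProducts

namespace MultilinearCommutatorWord

variable {G : Type*} [Group G]

theorem exists_eval_mul_eq_mul_eval {n : ℕ} (w : MultilinearCommutatorWord n)
    (g h : Fin n → G) :
    ∃ a, IsProdOfAtMost (conjugatesOfFamilyAndInv g) (4 ^ n) a ∧
      w.eval (fun i => g i * h i) = a * w.eval h := by
  induction w with
  | var =>
    exact ⟨g 0, (IsProdOfAtMost.of_mem (mem_conjugatesOfFamilyAndInv 0)).mono le_rfl
      (by norm_num), rfl⟩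
  | @comm m k u v ihu ihv =>
    obtain ⟨a, ha, hu⟩ := ihu (g ∘ Fin.castAdd k) (h ∘ Fin.castAdd k)
    obtain ⟨b, hb, hv⟩ := ihv (g ∘ Fin.natAdd m) (h ∘ Fin.natAdd m)
    have hbound : 2 * (4 ^ m + 4 ^ k) ≤ 4 ^ (m + k) := by
      have hm : 4 ≤ 4 ^ m := Nat.le_self_pow u.arity_pos.ne' 4
      have hk : 4 ≤ 4 ^ k := Nat.le_self_pow v.arity_pos.ne' 4
      rw [pow_add]
      nlinarith
    obtain ⟨c, hc, hcomm⟩ := IsProdOfAtMost.exists_commutatorElement_mul_mul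
      (fun _ => inv_mem_conjugatesOfFamilyAndInv) (fun d _ => conj_mem_conjugatesOfFamilyAndInv d)
      (ha.mono (conjugatesOfFamilyAndInv_comp_subset _) le_rfl)
      (hb.mono (conjugatesOfFamilyAndInv_comp_subset _) le_rfl) (u.eval _) (v.eval _)
    exact ⟨c, hc.mono subset_rfl hbound, (congrArg₂ (⁅·, ·⁆) hu hv).trans hcomm⟩

end MultilinearCommutatorWord

/-- For every `n` there is a positive integer `t` depending only on `n` such that for every
multilinear commutator word `w` on `n` variables, every group `G`, every normal subgroup
`H` of `G` and all `g i ∈ G`, `h i ∈ H`, the value `w(g 0 * h 0, ..., g (n-1) * h (n-1))`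
can be written as `a * x` where `a` is a product of at most `t` conjugates in `G` of
elements of `{g i, (g i)⁻¹}` and `x` is a `w`-value of `H`. -/
theorem value_decomposition_mod_normal (n : ℕ) :
    ∃ t : ℕ, 0 < t ∧ ∀ {G : Type u} [Group G] (w : MultilinearCommutatorWord n)
      (H : Subgroup G), H.Normal → ∀ (g h : Fin n → G), (∀ i, h i ∈ H) →
      ∃ (a x : G) (L : List G),
        w.eval (fun i => g i * h i) = a * x ∧
        a = L.prod ∧ L.length ≤ t ∧
        (∀ z ∈ L, ∃ (c : G) (i : Fin n), z = c * g i * c⁻¹ ∨ z = c * (g i)⁻¹ * c⁻¹) ∧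
        (∃ f : Fin n → G, (∀ i, f i ∈ H) ∧ w.eval f = x) := by
  refine ⟨4 ^ n, by positivity, fun w H _ g h hh => ?_⟩
  obtain ⟨a, ⟨L, hlen, hmem, rfl⟩, heval⟩ := w.exists_eval_mul_eq_mul_eval g h
  exact ⟨L.prod, w.eval h, L, heval, rfl, hlen, hmem, h, hh, rfl⟩
end

section
/- Let G be a group, let Δ(G) be the set of FC-elements of G, and let x ∈ Δ(G). Then the normal closure in G of the subgroup [Δ(G), x] generated by all commutators [y, x] with y ∈ Δ(G) is finite. -/
/-!
Let `C = xᴳ`, a finite set of FC-elements. A conjugate of `[y, x]` by `g` equals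
`(gy) x (gy)⁻¹ · (g x g⁻¹)⁻¹ ∈ C C⁻¹`, so the normal closure `N` is generated by a finite subset
of `H = ⟨C⟩`. The centralizer of `C` has finite index, so `H` is central-by-finite and, by Schur's
theorem, `H'` is finite; hence so is `N' ≤ H'`. For `y ∈ Δ(G)`, `[y, x]` lies in the derived
subgroup of `⟨x, y⟩`, finite by the same argument, so the generators of `N` have finite order.
Thus `N / N'` is a finitely generated abelian torsion group, hence finite, and `N` is finite.
-/

open scoped commutatorElement

open Subgroup Group

open scoped Pointwise

section

variable {G : Type*} [Group G]

def IsFCElement (g : G) : Prop := {t : G | IsConj g t}.Finite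

theorem IsFCElement.finiteIndex_centralizer {g : G} (hg : IsFCElement g) :
    (centralizer {g}).FiniteIndex := by
  have : Finite (MulAction.orbit (ConjAct G) g) :=
    (hg.subset fun _ ht ↦ (ConjAct.mem_orbit_conjAct.mp ht).symm).to_subtype
  have : Finite (G ⧸ centralizer {g}) :=
    .of_equiv _ ((MulAction.orbitEquivQuotientStabilizer (ConjAct G) g).trans
      (quotientEquivOfEq (ConjAct.stabilizer_eq_centralizer g)))
  exact finiteIndex_of_finite_quotient

theorem finiteIndex_centralizer_of_isFCElement {s : Set G} (hs : s.Finite)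
    (h : ∀ g ∈ s, IsFCElement g) : (centralizer s).FiniteIndex := by
  have := hs.to_subtype
  rw [centralizer_eq_iInf, iInf_subtype']
  exact finiteIndex_iInf fun g ↦ (h g g.2).finiteIndex_centralizer

theorem commutatorElement_mul_central_left (a b : G) {z : G} (hz : z ∈ center G) :
    ⁅a * z, b⁆ = ⁅a, b⁆ :=
  calc ⁅a * z, b⁆ = a * (z * b * z⁻¹) * a⁻¹ * b⁻¹ := by group
    _ = ⁅a, b⁆ := by rw [← mem_center_iff.mp hz b, mul_inv_cancel_right, commutatorElement_def]

theorem commutatorElement_mul_central (a b : G) {z w : G} (hz : z ∈ center G)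
    (hw : w ∈ center G) : ⁅a * z, b * w⁆ = ⁅a, b⁆ := by
  rw [commutatorElement_mul_central_left _ _ hz, ← commutatorElement_inv,
    commutatorElement_mul_central_left _ _ hw, commutatorElement_inv]

variable (G) in
theorem finite_commutatorSet_of_finiteIndex_center [(center G).FiniteIndex] :
    Finite (commutatorSet G) := by
  let f : (G ⧸ center G) × (G ⧸ center G) → G := fun p ↦ ⁅p.1.out, p.2.out⁆
  refine ((Set.finite_range f).subset ?_).to_subtype
  rintro _ ⟨a, b, rfl⟩
  obtain ⟨z, hz⟩ := QuotientGroup.mk_out_eq_mul (center G) a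
  obtain ⟨w, hw⟩ := QuotientGroup.mk_out_eq_mul (center G) b
  exact ⟨(a, b), by simp only [f, hz, hw, commutatorElement_mul_central _ _ z.2 w.2]⟩

theorem finite_commutator_closure_of_finiteIndex_centralizer {s : Set G}
    [(centralizer s).FiniteIndex] : Finite ↥⁅closure s, closure s⁆ := by
  have hcenter : (centralizer s).subgroupOf (closure s) ≤ center (closure s) := fun z hz ↦ by
    rw [mem_subgroupOf, ← centralizer_closure] at hz
    exact mem_center_iff.mpr fun g ↦ Subtype.ext (mem_centralizer_iff.mp hz g g.2)
  have := finiteIndex_of_le hcenter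
  have := finite_commutatorSet_of_finiteIndex_center (closure s)
  rw [← map_subtype_commutator]
  exact .of_equiv _ (equivMapOfInjective _ _ (subtype_injective _)).toEquiv

theorem finite_commutator_closure_of_isFCElement {s : Set G} (hs : s.Finite)
    (h : ∀ g ∈ s, IsFCElement g) : Finite ↥⁅closure s, closure s⁆ :=
  have := finiteIndex_centralizer_of_isFCElement hs h
  finite_commutator_closure_of_finiteIndex_centralizer

theorem isOfFinOrder_commutatorElement_of_isFCElement {x y : G} (hx : IsFCElement x)
    (hy : IsFCElement y) : IsOfFinOrder ⁅x, y⁆ := by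
  let K := ⁅closure {x, y}, closure {x, y}⁆
  have := finite_commutator_closure_of_isFCElement (Set.toFinite {x, y}) (by simp [hx, hy])
  have hmem : ⁅x, y⁆ ∈ K := commutator_mem_commutator (subset_closure (by simp))
    (subset_closure (by simp))
  exact K.subtype.isOfFinOrder (isOfFinOrder_of_finite (⟨_, hmem⟩ : K))

theorem finite_of_finite_commutator_of_closure_eq_top {K : Type*} [Group K]
    [Finite (commutator K)] {Q : Set K} (hQ : Q.Finite) (htors : ∀ q ∈ Q, IsOfFinOrder q)
    (hgen : closure Q = ⊤) : Finite K := by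
  have hgenA : closure (Abelianization.of '' Q) = ⊤ := by
    rw [← MonoidHom.map_closure, hgen, ← MonoidHom.range_eq_map, MonoidHom.range_eq_top]
    exact QuotientGroup.mk_surjective
  have : Group.FG (Abelianization K) := Group.fg_iff.mpr ⟨_, hgenA, hQ.image _⟩
  have htorsA : IsMulTorsion (Abelianization K) := by
    have : closure (Abelianization.of '' Q) ≤ CommGroup.torsion (Abelianization K) := by
      rw [closure_le]
      rintro _ ⟨q, hq, rfl⟩
      exact Abelianization.of.isOfFinOrder (htors q hq)
    exact fun a ↦ this (hgenA ▸ mem_top a)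
  have : Finite (Abelianization K) := CommGroup.finite_of_fg_isMulTorsion _ htorsA
  exact (finite_iff_subgroup_quotient (commutator K)).mpr ⟨inferInstance, this⟩

theorem finite_closure_of_finite_commutator {Q : Set G} (hQ : Q.Finite)
    (htors : ∀ q ∈ Q, IsOfFinOrder q) (hcomm : Finite ↥⁅closure Q, closure Q⁆) :
    Finite (closure Q) := by
  have : Finite (commutator (closure Q)) := by
    rw [← map_subtype_commutator] at hcomm
    exact .of_equiv _ (equivMapOfInjective _ _ (subtype_injective _)).toEquiv.symm
  exact finite_of_finite_commutator_of_closure_eq_top (hQ.preimage Subtype.coe_injective.injOn)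
    (fun q hq ↦ Submonoid.isOfFinOrder_coe.mp (htors q hq)) (closure_preimage_eq_top Q)

theorem mem_mul_inv_of_isConj_commutatorElement {x y q : G} (h : IsConj ⁅y, x⁆ q) :
    q ∈ {t | IsConj x t} * {t | IsConj x t}⁻¹ := by
  obtain ⟨g, rfl⟩ := isConj_iff.mp h
  refine Set.mem_mul.mpr ⟨g * y * x * (g * y)⁻¹, isConj_iff.mpr ⟨g * y, rfl⟩,
    (g * x * g⁻¹)⁻¹, Set.inv_mem_inv.mpr
      (show g * x * g⁻¹ ∈ {t | IsConj x t} from isConj_iff.mpr ⟨g, rfl⟩), ?_⟩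
  rw [commutatorElement_def]
  group

end

/-- Let `G` be a group and `x` an FC-element of `G` (an element with finite conjugacy
class). Then the normal closure in `G` of the subgroup generated by the commutators
`[y, x]` with `y` ranging over the FC-elements of `G` is finite. -/
theorem normalClosure_commutators_with_FC_finite {G : Type*} [Group G]
    (x : G) (hx : {y : G | IsConj x y}.Finite) :
    ((Subgroup.normalClosure
        {z : G | ∃ y : G, {t : G | IsConj y t}.Finite ∧ z = ⁅y, x⁆}) : Set G).Finite := by
  set C := {t : G | IsConj x t}
  set Q := conjugatesOfSet {z : G | ∃ y : G, {t : G | IsConj y t}.Finite ∧ z = ⁅y, x⁆}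
  have hQC : Q ⊆ C * C⁻¹ := fun q hq ↦ by
    obtain ⟨_, ⟨y, -, rfl⟩, hq⟩ := mem_conjugatesOfSet_iff.mp hq
    exact mem_mul_inv_of_isConj_commutatorElement hq
  have htors : ∀ q ∈ Q, IsOfFinOrder q := fun q hq ↦ by
    obtain ⟨_, ⟨y, hy, rfl⟩, hq⟩ := mem_conjugatesOfSet_iff.mp hq
    exact hq.isOfFinOrder (isOfFinOrder_commutatorElement_of_isFCElement hy hx)
  have hle : closure Q ≤ closure C := (closure_le _).mpr fun _ hq ↦ by
    obtain ⟨a, ha, b, hb, rfl⟩ := hQC hq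
    exact mul_mem (subset_closure ha) (inv_mem_iff.mp (subset_closure hb))
  have hC : ∀ c ∈ C, IsFCElement c := fun c hc ↦ hx.subset fun _ ht ↦ hc.trans ht
  have : Finite ↥⁅closure C, closure C⁆ := finite_commutator_closure_of_isFCElement hx hC
  have hcomm : Finite ↥⁅closure Q, closure Q⁆ :=
    .of_injective _ (inclusion_injective (commutator_mono hle hle))
  exact Set.finite_coe_iff.mp
    (finite_closure_of_finite_commutator ((hx.mul hx.inv).subset hQC) htors hcomm)
end

section
/- Let G be a locally nilpotent group that is residually finite and contains an element x whose centralizer C_G(x) is finite. Then G is finite. -/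
/-!
Residual finiteness gives a normal subgroup `K` of finite index avoiding the finitely many
nontrivial elements of `C_G(x)`. For `g ∈ K`, the iterated commutators `⁅⋯⁅⁅g, x⁆, x⁆⋯, x⁆`
stay in `K` and, since `⟨x, g⟩` is nilpotent, eventually vanish; the last nontrivial one
centralizes `x`, so it cannot exist and `g = 1`. Hence the trivial subgroup `K` has finite
index.
-/

open Subgroup
open scoped commutatorElement

section

variable {G : Type*} [Group G]

theorem iterate_commutator_mem_lowerCentralSeries (g x : G) (n : ℕ) :
    (fun u => ⁅u, x⁆)^[n] g ∈ (⊤ : Subgroup G).lowerCentralSeries n := by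
  induction n with
  | zero => exact mem_top g
  | succ n ih =>
    rw [Function.iterate_succ_apply']
    exact commutator_mem_commutator ih (mem_top x)

theorem Group.IsNilpotent.exists_iterate_commutator_eq_one [Group.IsNilpotent G] (g x : G) :
    ∃ n, (fun u => ⁅u, x⁆)^[n] g = 1 := by
  obtain ⟨n, hn⟩ := Subgroup.nilpotent_iff_lowerCentralSeries.mp ‹Group.IsNilpotent G›
  exact ⟨n, mem_bot.mp (hn ▸ iterate_commutator_mem_lowerCentralSeries g x n)⟩

theorem Subgroup.Normal.eq_bot_of_disjoint_centralizer [Group.IsNilpotent G] {N : Subgroup G}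
    (hN : N.Normal) {x : G} (hdisj : Disjoint N (centralizer {x})) : N = ⊥ := by
  refine eq_bot_iff.mpr fun g hg => mem_bot.mpr ?_
  by_contra hg1
  have hmem (n : ℕ) : (fun u => ⁅u, x⁆)^[n] g ∈ N := by
    induction n with
    | zero => exact hg
    | succ n ih =>
      rw [Function.iterate_succ_apply']
      exact commutator_le_left N ⊤ (commutator_mem_commutator ih (mem_top x))
  have hne (n : ℕ) : (fun u => ⁅u, x⁆)^[n] g ≠ 1 := by
    induction n with
    | zero => exact hg1
    | succ n ih =>
      rw [Function.iterate_succ_apply', Ne, commutatorElement_eq_one_iff_mul_comm]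
      exact fun hcomm =>
        ih (disjoint_def.mp hdisj (hmem n) (mem_centralizer_singleton_iff.mpr hcomm))
  obtain ⟨n, hn⟩ := Group.IsNilpotent.exists_iterate_commutator_eq_one g x
  exact hne n hn

theorem Subgroup.Normal.eq_one_of_mem_of_disjoint_centralizer {K : Subgroup G} (hK : K.Normal)
    {x g : G} (hnil : Group.IsNilpotent (closure {x, g})) (hdisj : Disjoint K (centralizer {x}))
    (hg : g ∈ K) : g = 1 := by
  set L := closure {x, g}
  have hxL : x ∈ L := subset_closure (by simp)
  have hgL : g ∈ L := subset_closure (by simp)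
  have hdisjL : Disjoint (K.subgroupOf L) (centralizer {(⟨x, hxL⟩ : L)}) :=
    disjoint_def.mpr fun {h} hhK hhC => Subtype.ext <| disjoint_def.mp hdisj hhK <|
      mem_centralizer_singleton_iff.mpr <|
        congrArg Subtype.val (mem_centralizer_singleton_iff.mp hhC)
  have hgK : (⟨g, hgL⟩ : L) ∈ K.subgroupOf L := mem_subgroupOf.mpr hg
  rw [(hK.subgroupOf L).eq_bot_of_disjoint_centralizer hdisjL, mem_bot] at hgK
  exact congrArg Subtype.val hgK

theorem exists_normal_finiteIndex_disjoint_of_finite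
    (hrf : ∀ g : G, g ≠ 1 → ∃ N : Subgroup G, N.Normal ∧ N.FiniteIndex ∧ g ∉ N)
    (C : Subgroup G) (hC : (C : Set G).Finite) :
    ∃ K : Subgroup G, K.Normal ∧ K.FiniteIndex ∧ Disjoint K C := by
  let ι := {c : G // c ∈ C ∧ c ≠ 1}
  have : Finite ι := (hC.subset fun c hc => hc.1).to_subtype
  choose N hNnormal hNfi hNc using fun i : ι => hrf i.1 i.2.2
  refine ⟨⨅ i, N i, normal_iInf_normal hNnormal, finiteIndex_iInf hNfi, ?_⟩
  refine disjoint_def.mpr fun {c} hcK hcC => ?_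
  by_contra hc1
  exact hNc ⟨c, hcC, hc1⟩ (mem_iInf.mp hcK ⟨c, hcC, hc1⟩)

end

/-- A locally nilpotent, residually finite group containing an element with finite
centralizer is finite. -/
theorem finite_of_locallyNilpotent_residuallyFinite {G : Type*} [Group G]
    (hln : ∀ S : Set G, S.Finite → Group.IsNilpotent (Subgroup.closure S))
    (hrf : ∀ g : G, g ≠ 1 → ∃ N : Subgroup G, N.Normal ∧ N.FiniteIndex ∧ g ∉ N)
    (x : G) (hx : (Subgroup.centralizer {x} : Set G).Finite) :
    Finite G := by
  obtain ⟨K, hKnormal, hKfi, hdisj⟩ := exists_normal_finiteIndex_disjoint_of_finite hrf _ hx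
  have hKbot : K = ⊥ := eq_bot_iff.mpr fun g hg => mem_bot.mpr <|
    hKnormal.eq_one_of_mem_of_disjoint_centralizer (hln {x, g} (Set.toFinite _)) hdisj hg
  subst hKbot
  exact (finite_iff_finite_and_finiteIndex ⊥).mpr ⟨inferInstance, hKfi⟩
end

section
/- Let G be a locally finite group and x an element of G such that the centralizer C_G(x) is finite of order m. Then for every normal subgroup N of G, the centralizer of the coset xN in the quotient group G/N has order at most m. -/
/-! Lifts of finitely many elements of `C_{G/N}(xN)`, together with `x`, generate a finite subgroup
`K`, and `K ⧸ (N ⊓ K)` embeds in `G ⧸ N`; so it suffices to bound centralizers in a finite group `K`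
with normal subgroup `M`. There the conjugacy class of `x` lies in the preimage of the class of `xM`,
so `|x^K| ≤ |M| · |(xM)^(K/M)|`, and orbit–stabilizer together with `|K| = |M| · |K/M|` turns this
into `|C_{K/M}(xM)| ≤ |C_K(x)|`. -/

open Subgroup QuotientGroup MulAction

namespace Subgroup

variable {G H : Type*} [Group G] [Group H]

theorem comap_centralizer_singleton_of_injective {f : H →* G} (hf : Function.Injective f)
    (a : H) : (centralizer {f a}).comap f = centralizer {a} := by
  ext b
  simp only [mem_comap, mem_centralizer_singleton_iff, ← map_mul, hf.eq_iff]

theorem nat_card_centralizer_le_of_injective {f : H →* G} (hf : Function.Injective f) (a : H)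
    [Finite (centralizer {f a})] :
    Nat.card (centralizer {a}) ≤ Nat.card (centralizer {f a}) := by
  rw [← comap_centralizer_singleton_of_injective hf]
  exact Nat.le_of_dvd Nat.card_pos (card_comap_dvd_of_injective _ f hf)

theorem ncard_orbit_conjAct_mul_nat_card_centralizer (x : G) :
    (orbit (ConjAct G) x).ncard * Nat.card (centralizer {x}) = Nat.card G := by
  rw [nat_card_centralizer_nat_card_stabilizer, ← index_stabilizer, mul_comm, card_mul_index]
  rfl

theorem nat_card_centralizer_mk_le [Finite G] (N : Subgroup G) [N.Normal] (x : G) :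
    Nat.card (centralizer {(x : G ⧸ N)}) ≤ Nat.card (centralizer {x}) := by
  have orbit_subset : orbit (ConjAct G) x ⊆ (↑) ⁻¹' orbit (ConjAct (G ⧸ N)) (x : G ⧸ N) := by
    rintro _ ⟨g, rfl⟩
    exact ⟨ConjAct.toConjAct ((ConjAct.ofConjAct g : G) : G ⧸ N), by simp [ConjAct.smul_def]⟩
  have ncard_orbit_le : (orbit (ConjAct G) x).ncard ≤
      Nat.card N * (orbit (ConjAct (G ⧸ N)) (x : G ⧸ N)).ncard :=
    calc (orbit (ConjAct G) x).ncard ≤ ((↑) ⁻¹' orbit (ConjAct (G ⧸ N)) (x : G ⧸ N)).ncard :=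
          Set.ncard_le_ncard orbit_subset
      _ = _ := by rw [← Nat.card_coe_set_eq, card_preimage_mk, Nat.card_coe_set_eq]
  have hpos : 0 < Nat.card N * (orbit (ConjAct (G ⧸ N)) (x : G ⧸ N)).ncard :=
    Nat.mul_pos Nat.card_pos ((Set.ncard_pos (Set.toFinite _)).mpr (nonempty_orbit _))
  refine Nat.le_of_mul_le_mul_left ?_ hpos
  calc Nat.card N * (orbit (ConjAct (G ⧸ N)) (x : G ⧸ N)).ncard *
        Nat.card (centralizer {(x : G ⧸ N)})
      = Nat.card N * Nat.card (G ⧸ N) := by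
        rw [mul_assoc, ncard_orbit_conjAct_mul_nat_card_centralizer]
    _ = (orbit (ConjAct G) x).ncard * Nat.card (centralizer {x}) := by
        rw [ncard_orbit_conjAct_mul_nat_card_centralizer, card_eq_card_quotient_mul_card_subgroup N,
          mul_comm]
    _ ≤ _ := Nat.mul_le_mul_right _ ncard_orbit_le

end Subgroup

theorem ncard_le_nat_card_centralizer_of_subset_centralizer_mk {G : Type*} [Group G]
    (hlf : ∀ S : Set G, S.Finite → (Subgroup.closure S : Set G).Finite) (x : G)
    [Finite (centralizer {x})] (N : Subgroup G) [N.Normal] {s : Set (G ⧸ N)}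
    (hs : s.Finite) (hsC : s ⊆ centralizer {(x : G ⧸ N)}) :
    s.ncard ≤ Nat.card (centralizer {x}) := by
  set K := closure (insert x (Quotient.out '' s))
  have : Finite K := (hlf _ ((hs.image _).insert x)).to_subtype
  let xK : K := ⟨x, subset_closure (Set.mem_insert _ _)⟩
  let ι : K ⧸ N.subgroupOf K →* G ⧸ N := QuotientGroup.map _ N K.subtype le_rfl
  have hι : Function.Injective ι := by
    rw [← MonoidHom.ker_eq_bot_iff]
    exact (ker_map _ _ _ _).trans (map_mk'_self _)
  have hs_image : s ⊆ ι '' centralizer {(xK : K ⧸ N.subgroupOf K)} := by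
    intro a ha
    let aK : K := ⟨a.out, subset_closure (Set.mem_insert_of_mem _ ⟨a, ha, rfl⟩)⟩
    have hιa : ι aK = a := out_eq' a
    refine ⟨aK, ?_, hιa⟩
    rw [← comap_centralizer_singleton_of_injective hι]
    exact show ι aK ∈ centralizer {ι xK} from hιa ▸ hsC ha
  calc s.ncard ≤ (ι '' centralizer {(xK : K ⧸ N.subgroupOf K)}).ncard :=
        Set.ncard_le_ncard hs_image (Set.toFinite _)
    _ ≤ Nat.card (centralizer {(xK : K ⧸ N.subgroupOf K)}) :=
        (Set.ncard_image_le (Set.toFinite _)).trans (Nat.card_coe_set_eq _).ge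
    _ ≤ Nat.card (centralizer {xK}) := nat_card_centralizer_mk_le _ _
    _ ≤ Nat.card (centralizer {x}) :=
        have : Finite (centralizer {K.subtype xK}) := ‹Finite (centralizer {x})›
        nat_card_centralizer_le_of_injective K.subtype_injective xK

/-- Let `G` be a locally finite group and `x` an element of `G` whose centralizer is finite
of order `m`. Then for every normal subgroup `N` of `G`, the centralizer of the image of
`x` in `G ⧸ N` is finite of order at most `m`. -/
theorem centralizer_quotient_card_le {G : Type*} [Group G]
    (hlf : ∀ S : Set G, S.Finite → (Subgroup.closure S : Set G).Finite)
    (x : G) (m : ℕ)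
    (hfin : (Subgroup.centralizer {x} : Set G).Finite)
    (hcard : Nat.card (Subgroup.centralizer ({x} : Set G)) = m)
    (N : Subgroup G) [N.Normal] :
    (Subgroup.centralizer {(QuotientGroup.mk x : G ⧸ N)} : Set (G ⧸ N)).Finite ∧
      Nat.card (Subgroup.centralizer ({QuotientGroup.mk x} : Set (G ⧸ N))) ≤ m := by
  have : Finite (centralizer {x}) := hfin.to_subtype
  have bound (s : Set (G ⧸ N)) (hs : s.Finite) (hsC : s ⊆ centralizer {(x : G ⧸ N)}) :
      s.ncard ≤ m :=
    hcard ▸ ncard_le_nat_card_centralizer_of_subset_centralizer_mk hlf x N hs hsC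
  have hfinite : (centralizer {(x : G ⧸ N)} : Set (G ⧸ N)).Finite := by
    by_contra hinf
    obtain ⟨t, htC, htfin, htcard⟩ := Set.Infinite.exists_subset_ncard_eq hinf (m + 1)
    have := bound t htfin htC
    omega
  refine ⟨hfinite, ?_⟩
  rw [← SetLike.coe_sort_coe, Nat.card_coe_set_eq]
  exact bound _ hfinite subset_rfl
end

section
/- Let d, r, s be positive integers and let G be a soluble group of derived length d generated by a set X such that every element of X has finite order dividing r and has at most s conjugates in G. Then G has finite exponent bounded above by a number depending only on d, r and s. -/
/-!
Induction on the derived length. Modulo the normal closure `K` of the commutators `⁅x, y⁆` with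
`x, y ∈ X` the generators commute, so `g ^ r ∈ K` for every `g`. The group `K` has smaller derived
length and is generated by the conjugates of these commutators; each of them has at most `s²`
conjugates and lies in the normal closure of a single `x ∈ X`, which by Dietzmann's lemma is
finite of order at most `(s + 1) ^ (s * (r - 1))`. Dietzmann's lemma: a word in the at most `s`
conjugates of `x` that is longer than `s * (r - 1)` contains some letter `r` times; moving these
occurrences to the front only conjugates the letters they pass, and there they cancel.
-/

open Subgroup Finset
open scoped commutatorElement Nat Pointwise

section Dietzmann

variable {G : Type*} [Group G] [DecidableEq G] {S : Finset G}

lemma exists_list_prod_eq_mul (hS : ∀ g : G, ∀ u ∈ S, g * u * g⁻¹ ∈ S) {l : List G}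
    (hl : ∀ b ∈ l, b ∈ S) {a : G} (ha : a ∈ l) :
    ∃ t : List G, (∀ b ∈ t, b ∈ S) ∧ t.length + 1 = l.length ∧ t.count a + 1 = l.count a ∧
      l.prod = a * t.prod := by
  obtain ⟨l₁, l₂, rfl⟩ := List.append_of_mem ha
  refine ⟨l₁.map (MulAut.conj a⁻¹) ++ l₂, ?_, by simp [add_assoc], ?_, ?_⟩
  · simp only [List.mem_append, List.mem_map, List.mem_cons] at hl ⊢
    rintro b (⟨b, hb, rfl⟩ | hb)
    · exact hS _ b (hl b (.inl hb))
    · exact hl b (.inr (.inr hb))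
  · have hfix : a = MulAut.conj a⁻¹ a := by simp
    rw [List.count_append, List.count_append, List.count_cons_self]
    nth_rewrite 1 [hfix]
    rw [List.count_map_of_injective _ _ (MulAut.conj a⁻¹).injective]
    ring
  · rw [List.prod_append, List.prod_append, List.prod_cons, ← map_list_prod]
    simp only [MulAut.conj_apply, inv_inv]
    group

lemma exists_list_prod_eq_pow_mul (hS : ∀ g : G, ∀ u ∈ S, g * u * g⁻¹ ∈ S) (a : G) :
    ∀ {n : ℕ} {l : List G}, (∀ b ∈ l, b ∈ S) → n ≤ l.count a →
      ∃ t : List G, (∀ b ∈ t, b ∈ S) ∧ t.length + n = l.length ∧ l.prod = a ^ n * t.prod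
  | 0, l, hl, _ => ⟨l, hl, rfl, by simp⟩
  | n + 1, l, hl, hn => by
    obtain ⟨t₁, ht₁, hlen₁, hcount₁, hprod₁⟩ :=
      exists_list_prod_eq_mul hS hl (a := a) (List.count_pos_iff.mp (by omega))
    obtain ⟨t, ht, hlen, hprod⟩ := exists_list_prod_eq_pow_mul hS a ht₁ (n := n) (by omega)
    exact ⟨t, ht, by omega, by rw [hprod₁, hprod, pow_succ', mul_assoc]⟩

lemma exists_list_prod_eq_of_length_le (hS : ∀ g : G, ∀ u ∈ S, g * u * g⁻¹ ∈ S) {r : ℕ}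
    (hr : 0 < r) (hord : ∀ u ∈ S, u ^ r = 1) (l : List G) (hl : ∀ b ∈ l, b ∈ S) :
    ∃ t : List G, (∀ b ∈ t, b ∈ S) ∧ t.length ≤ #S * (r - 1) ∧ t.prod = l.prod := by
  induction hn : l.length using Nat.strong_induction_on generalizing l with
  | _ n ih =>
  by_cases hshort : l.length ≤ #S * (r - 1)
  · exact ⟨l, hl, hshort, rfl⟩
  obtain ⟨a, ha, hcount⟩ : ∃ a ∈ l, r ≤ l.count a := by
    by_contra! hlt
    refine hshort ?_
    calc l.length = ∑ a ∈ l.toFinset, l.count a := (List.sum_toFinset_count_eq_length l).symm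
      _ ≤ ∑ _a ∈ l.toFinset, (r - 1) :=
        Finset.sum_le_sum fun a ha => Nat.le_sub_one_of_lt (hlt a (List.mem_toFinset.mp ha))
      _ = #l.toFinset * (r - 1) := by rw [sum_const, smul_eq_mul]
      _ ≤ #S * (r - 1) := by
        gcongr
        exact fun b hb => hl b (List.mem_toFinset.mp hb)
  obtain ⟨t, ht, hlen, hprod⟩ := exists_list_prod_eq_pow_mul hS a hl hcount
  rw [hord a (hl a ha), one_mul] at hprod
  obtain ⟨t', ht', hlen', hprod'⟩ := ih t.length (by omega) t ht rfl
  exact ⟨t', ht', hlen', hprod'.trans hprod.symm⟩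

lemma list_prod_mem_insert_one_pow (l : List G) (hl : ∀ b ∈ l, b ∈ S) :
    l.prod ∈ insert 1 S ^ l.length := by
  induction l with
  | nil => simp
  | cons a l ih =>
    simp only [List.mem_cons, forall_eq_or_imp] at hl
    rw [List.prod_cons, List.length_cons, pow_succ']
    exact mul_mem_mul (mem_insert_of_mem hl.1) (ih hl.2)

lemma closure_subset_insert_one_pow (hS : ∀ g : G, ∀ u ∈ S, g * u * g⁻¹ ∈ S) {r : ℕ}
    (hr : 0 < r) (hord : ∀ u ∈ S, u ^ r = 1) :
    (closure (S : Set G) : Set G) ⊆ ↑(insert 1 S ^ (#S * (r - 1))) := by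
  intro g hg
  have hfinOrder : ∀ u ∈ (S : Set G), IsOfFinOrder u :=
    fun u hu => isOfFinOrder_iff_pow_eq_one.mpr ⟨r, hr, hord u hu⟩
  rw [SetLike.mem_coe, ← mem_toSubmonoid, closure_toSubmonoid_of_isOfFinOrder hfinOrder] at hg
  obtain ⟨l, hl, rfl⟩ := Submonoid.exists_list_of_mem_closure hg
  obtain ⟨t, ht, hlen, hprod⟩ := exists_list_prod_eq_of_length_le hS hr hord l hl
  rw [← hprod]
  exact pow_subset_pow_right (mem_insert_self 1 S) hlen (list_prod_mem_insert_one_pow t ht)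

lemma pow_factorial_eq_one_of_mem_closure (hS : ∀ g : G, ∀ u ∈ S, g * u * g⁻¹ ∈ S) {r : ℕ}
    (hr : 0 < r) (hord : ∀ u ∈ S, u ^ r = 1) {N : ℕ} (hN : (#S + 1) ^ (#S * (r - 1)) ≤ N)
    {g : G} (hg : g ∈ closure (S : Set G)) : g ^ N ! = 1 := by
  have hsub := closure_subset_insert_one_pow hS hr hord
  have : Finite (closure (S : Set G)) := ((finite_toSet _).subset hsub).to_subtype
  have hcard : Nat.card (closure (S : Set G)) ≤ N :=
    calc Nat.card (closure (S : Set G))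
        = (closure (S : Set G) : Set G).ncard := Nat.card_coe_set_eq _
      _ ≤ #(insert 1 S ^ (#S * (r - 1))) := by
        rw [← Set.ncard_coe_finset]; exact Set.ncard_le_ncard hsub (finite_toSet _)
      _ ≤ #(insert 1 S) ^ (#S * (r - 1)) := card_pow_le
      _ ≤ N := le_trans (by gcongr; exact card_insert_le 1 S) hN
  obtain ⟨k, hk⟩ := Nat.dvd_factorial Nat.card_pos hcard
  have hgcard : g ^ Nat.card (closure (S : Set G)) = 1 :=
    congrArg Subtype.val (pow_card_eq_one' (x := (⟨g, hg⟩ : closure (S : Set G))))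
  rw [hk, pow_mul, hgcard, one_pow]

end Dietzmann

def dietzmannBound (r s : ℕ) : ℕ := (s + 1) ^ (s * (r - 1))

theorem pow_factorial_dietzmannBound_eq_one {G : Type*} [Group G] {r s : ℕ} (hr : 0 < r) {x : G}
    (hx : x ^ r = 1) (hxs : (conjugatesOf x).encard ≤ s) {g : G} (hg : g ∈ normalClosure {x}) :
    g ^ (dietzmannBound r s)! = 1 := by
  classical
  have hfin : (conjugatesOf x).Finite := Set.finite_of_encard_le_coe hxs
  have hclosure : normalClosure {x} = closure (hfin.toFinset : Set G) := by
    simp [normalClosure, Group.conjugatesOfSet]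
  have hS : ∀ g : G, ∀ u ∈ hfin.toFinset, g * u * g⁻¹ ∈ hfin.toFinset := by
    simp only [Set.Finite.mem_toFinset]
    exact fun g u hu => hu.trans (isConj_iff.mpr ⟨g, rfl⟩)
  have hord : ∀ u ∈ hfin.toFinset, u ^ r = 1 := by
    simp only [Set.Finite.mem_toFinset]
    exact fun u hu => by simpa [hx] using (hu.pow r).symm
  have hcard : #hfin.toFinset ≤ s := by
    rwa [hfin.encard_eq_coe_toFinset_card, Nat.cast_le] at hxs
  refine pow_factorial_eq_one_of_mem_closure hS hr hord ?_ (hclosure ▸ hg)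
  unfold dietzmannBound
  gcongr
  omega

section Commutators

variable {G : Type*} [Group G] {X : Set G}

lemma mul_comm_of_closure_eq_top (hgen : closure X = ⊤)
    (hcomm : ∀ x ∈ X, ∀ y ∈ X, x * y = y * x) (a b : G) : a * b = b * a :=
  Set.centralizer_centralizer_comm_of_comm hcomm _
    (closure_le_centralizer_centralizer X (hgen ▸ mem_top a)) _
    (closure_le_centralizer_centralizer X (hgen ▸ mem_top b))

lemma commutator_le_of_commutatorElement_mem (hgen : closure X = ⊤) (K : Subgroup G) [K.Normal]
    (hK : ∀ x ∈ X, ∀ y ∈ X, ⁅x, y⁆ ∈ K) : commutator G ≤ K := by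
  have hgenQ : closure (QuotientGroup.mk' K '' X) = ⊤ := by
    rw [← MonoidHom.map_closure, hgen, map_top_of_surjective _ (QuotientGroup.mk'_surjective K)]
  have hcommQ : ∀ p ∈ QuotientGroup.mk' K '' X, ∀ q ∈ QuotientGroup.mk' K '' X, p * q = q * p := by
    rintro _ ⟨x, hx, rfl⟩ _ ⟨y, hy, rfl⟩
    rw [← commute_iff_eq, ← commutatorElement_eq_one_iff_commute, ← map_commutatorElement]
    exact (QuotientGroup.eq_one_iff _).mpr (hK x hx y hy)
  rw [commutator_def, commutator_le]
  intro a _ b _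
  rw [← QuotientGroup.eq_one_iff, ← QuotientGroup.mk'_apply, map_commutatorElement,
    commutatorElement_eq_one_iff_commute]
  exact mul_comm_of_closure_eq_top hgenQ hcommQ _ _

lemma pow_mem_commutator_of_closure_eq_top (hgen : closure X = ⊤) {r : ℕ}
    (hord : ∀ x ∈ X, x ^ r = 1) (g : G) : g ^ r ∈ commutator G := by
  let f : G →* Abelianization G := (powMonoidHom r).comp Abelianization.of
  have hker : closure X ≤ f.ker :=
    (closure_le _).mpr fun x hx => by simp [f, ← map_pow, hord x hx]
  rw [← Abelianization.ker_of, MonoidHom.mem_ker, map_pow]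
  exact hker (hgen ▸ mem_top g)

lemma map_derivedSeries_le_derivedSeries_succ {K : Subgroup G} (hK : K ≤ commutator G) (n : ℕ) :
    (derivedSeries K n).map K.subtype ≤ derivedSeries G (n + 1) := by
  induction n with
  | zero => simpa [← MonoidHom.range_eq_map] using hK
  | succ n ih =>
    rw [derivedSeries_succ, derivedSeries_succ, map_commutator]
    exact commutator_mono ih ih

lemma derivedSeries_eq_bot_of_le_commutator {K : Subgroup G} (hK : K ≤ commutator G) {n : ℕ}
    (hG : derivedSeries G (n + 1) = ⊥) : derivedSeries K n = ⊥ :=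
  (map_eq_bot_iff_of_injective _ K.subtype_injective).mp
    (le_bot_iff.mp (hG ▸ map_derivedSeries_le_derivedSeries_succ hK n))

lemma mem_normalClosure_of_isConj_commutatorElement {x y c : G} (h : IsConj ⁅x, y⁆ c) :
    c ∈ normalClosure {x} := by
  obtain ⟨w, rfl⟩ := isConj_iff.mp h
  have hxy : ⁅x, y⁆ ∈ normalClosure {x} := commutator_le_left _ ⊤
    (commutator_mem_commutator (subset_normalClosure rfl) (mem_top y))
  exact normalClosure_normal.conj_mem _ hxy w

lemma encard_conjugatesOf_commutatorElement_le (x y : G) :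
    (conjugatesOf ⁅x, y⁆).encard ≤ (conjugatesOf x).encard * (conjugatesOf y).encard := by
  have hsub : conjugatesOf ⁅x, y⁆ ⊆ Set.image2 (⁅·, ·⁆) (conjugatesOf x) (conjugatesOf y) := by
    intro c hc
    obtain ⟨w, rfl⟩ := isConj_iff.mp hc
    refine ⟨_, isConj_iff.mpr ⟨w, rfl⟩, _, isConj_iff.mpr ⟨w, rfl⟩, ?_⟩
    simp only [commutatorElement_def]
    group
  calc (conjugatesOf ⁅x, y⁆).encard
      ≤ (Set.image2 (⁅·, ·⁆) (conjugatesOf x) (conjugatesOf y)).encard := Set.encard_le_encard hsub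
    _ ≤ _ := by rw [← Set.image_prod, ← Set.encard_prod]; exact Set.encard_image_le _ _

lemma Subgroup.encard_conjugatesOf_le {K : Subgroup G} (c : K) :
    (conjugatesOf c).encard ≤ (conjugatesOf (c : G)).encard :=
  calc (conjugatesOf c).encard = (Subtype.val '' conjugatesOf c).encard :=
        (Subtype.val_injective.encard_image _).symm
    _ ≤ _ := Set.encard_le_encard (by rintro _ ⟨k, hk, rfl⟩; exact K.subtype.map_isConj hk)

end Commutators

def exponentBound : ℕ → ℕ → ℕ → ℕ
  | 0, _, _ => 1
  | d + 1, r, s => r * exponentBound d (dietzmannBound r s)! (s * s)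

lemma exponentBound_pos {d r s : ℕ} (hr : 0 < r) : 0 < exponentBound d r s := by
  induction d generalizing r s with
  | zero => exact Nat.one_pos
  | succ d ih => exact Nat.mul_pos hr (ih (Nat.factorial_pos _))

theorem pow_exponentBound_eq_one {d r s : ℕ} (hr : 0 < r) {G : Type*} [Group G] {X : Set G}
    (hder : derivedSeries G d = ⊥) (hgen : closure X = ⊤) (hord : ∀ x ∈ X, x ^ r = 1)
    (hconj : ∀ x ∈ X, (conjugatesOf x).encard ≤ s) (g : G) : g ^ exponentBound d r s = 1 := by
  induction d generalizing G r s with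
  | zero =>
    have hg : g ∈ (⊥ : Subgroup G) := hder ▸ mem_top g
    rw [mem_bot.mp hg, one_pow]
  | succ d ih =>
    set K := normalClosure (Set.image2 (⁅·, ·⁆) X X)
    have hKcomm : K ≤ commutator G := normalClosure_le_normal <| by
      rintro _ ⟨x, -, y, -, rfl⟩
      exact commutator_mem_commutator (mem_top x) (mem_top y)
    have hcommK : commutator G ≤ K := commutator_le_of_commutatorElement_mem hgen K
      fun x hx y hy => subset_normalClosure ⟨x, hx, y, hy, rfl⟩
    set Y : Set K := (↑) ⁻¹' Group.conjugatesOfSet (Set.image2 (⁅·, ·⁆) X X)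
    have hY : ∀ c ∈ Y, ∃ x ∈ X, ∃ y ∈ X, IsConj ⁅x, y⁆ (c : G) := by
      intro c hc
      obtain ⟨_, ⟨x, hx, y, hy, rfl⟩, h⟩ := Group.mem_conjugatesOfSet_iff.mp hc
      exact ⟨x, hx, y, hy, h⟩
    have hYord : ∀ c ∈ Y, c ^ (dietzmannBound r s)! = 1 := by
      intro c hc
      obtain ⟨x, hx, y, -, h⟩ := hY c hc
      have hc' := pow_factorial_dietzmannBound_eq_one hr (hord x hx) (hconj x hx)
        (mem_normalClosure_of_isConj_commutatorElement h)
      exact Subtype.ext (by simpa using hc')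
    have hYconj : ∀ c ∈ Y, (conjugatesOf c).encard ≤ ↑(s * s) := by
      intro c hc
      obtain ⟨x, hx, y, hy, h⟩ := hY c hc
      calc (conjugatesOf c).encard ≤ (conjugatesOf ⁅x, y⁆).encard := by
            rw [h.conjugatesOf_eq]; exact Subgroup.encard_conjugatesOf_le c
        _ ≤ (conjugatesOf x).encard * (conjugatesOf y).encard :=
            encard_conjugatesOf_commutatorElement_le x y
        _ ≤ ↑(s * s) := by push_cast; exact mul_le_mul' (hconj x hx) (hconj y hy)
    have hKpow : ∀ k : K, k ^ exponentBound d (dietzmannBound r s)! (s * s) = 1 :=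
      ih (Nat.factorial_pos _) (derivedSeries_eq_bot_of_le_commutator hKcomm hder)
        closure_closure_coe_preimage hYord hYconj
    have hgr : g ^ r ∈ K := hcommK (pow_mem_commutator_of_closure_eq_top hgen hord g)
    rw [exponentBound, pow_mul]
    exact congrArg Subtype.val (hKpow ⟨g ^ r, hgr⟩)

theorem soluble_bounded_exponent_general (d r s : ℕ) (hr : 0 < r) :
    ∃ B : ℕ, ∀ (G : Type u) [Group G] (X : Set G),
      derivedSeries G d = ⊥ →
      Subgroup.closure X = ⊤ →
      (∀ x ∈ X, x ^ r = 1) →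
      (∀ x ∈ X, {y : G | IsConj x y}.Finite ∧ {y : G | IsConj x y}.ncard ≤ s) →
      0 < Monoid.exponent G ∧ Monoid.exponent G ≤ B := by
  refine ⟨exponentBound d r s, fun G _ X hder hgen hord hconj => ?_⟩
  have hdvd : Monoid.exponent G ∣ exponentBound d r s :=
    Monoid.exponent_dvd_of_forall_pow_eq_one <| pow_exponentBound_eq_one hr hder hgen hord
      fun x hx => Set.encard_le_coe_iff_finite_ncard_le.mpr (hconj x hx)
  have hpos : 0 < exponentBound d r s := exponentBound_pos hr
  exact ⟨Nat.pos_of_dvd_of_pos hdvd hpos, Nat.le_of_dvd hpos hdvd⟩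

/-- Let `d, r, s` be positive integers. There is a bound `B`, depending only on `d`, `r`
and `s`, such that every soluble group of derived length (at most) `d` generated by a set
`X` of elements of finite order dividing `r`, each having at most `s` conjugates, has
finite exponent at most `B`. -/
theorem soluble_bounded_exponent (d r s : ℕ) (hd : 0 < d) (hr : 0 < r) (hs : 0 < s) :
    ∃ B : ℕ, ∀ (G : Type u) [Group G] (X : Set G),
      derivedSeries G d = ⊥ →
      Subgroup.closure X = ⊤ →
      (∀ x ∈ X, x ^ r = 1) →
      (∀ x ∈ X, {y : G | IsConj x y}.Finite ∧ {y : G | IsConj x y}.ncard ≤ s) →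
      0 < Monoid.exponent G ∧ Monoid.exponent G ≤ B :=
  soluble_bounded_exponent_general d r s hr
end
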